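/- arXiv:2504.08158 — 7 statements merged into one kernel-verified Lean document; each statement's English description precedes it below -/
import Mathlib

section
/- For integers Q ≥ 2 and real φ with 1 + φQ ≠ 0, the double sum over q from 1 to Q and j from 1 to Q+1 of (Q·𝟙(j > q) − j + 1 + φQ(2q − Q − 1)/(2(1 + φQ))) · 𝟙(j > q) equals Q(φQ³ + 2Q² − φQ − 2)/(12(1 + φQ)). -/
/-!
Since `𝟙(j > q)² = 𝟙(j > q)`, the `q`-th inner sum runs over the arithmetic progression
`j = q + 1, …, Q + 1` and, with `m = Q + 1 - q` terms and `B = φQ / (2(1 + φQ))`, equals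
`m(m - 1)/2 + m B (2q - Q - 1)`, a quadratic in `q`. The outer sum then follows from the
closed forms of `∑ q` and `∑ q²`.
-/

open Finset

lemma sum_Icc_one_ite_lt {M : Type*} [AddCommMonoid M] (q n : ℕ) (f : ℕ → M) :
    ∑ j ∈ Icc 1 n, (if q < j then f j else 0) = ∑ j ∈ Ioc q n, f j := by
  rw [← sum_filter]
  congr 1
  ext j
  simp only [mem_filter, mem_Icc, mem_Ioc]
  omega

lemma sum_Ioc_const_sub (a : ℝ) {q n : ℕ} (h : q ≤ n) :
    ∑ j ∈ Ioc q n, (a - j) = (n - q) * (a - q) - (n - q) * (n - q + 1) / 2 := by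
  obtain ⟨m, rfl⟩ := Nat.exists_eq_add_of_le h
  induction m with
  | zero => simp
  | succ m ih =>
    rw [← add_assoc, sum_Ioc_succ_top (Nat.le_add_right q m), ih (Nat.le_add_right q m)]
    push_cast
    ring

lemma sum_Icc_one_quadratic (a b c : ℝ) (n : ℕ) :
    ∑ k ∈ Icc 1 n, (a + b * k + c * k ^ 2)
      = n * a + b * (n * (n + 1) / 2) + c * (n * (n + 1) * (2 * n + 1) / 6) := by
  induction n with
  | zero => simp
  | succ n ih =>
    rw [sum_Icc_succ_top (Nat.le_add_left 1 n), ih]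
    push_cast
    ring

theorem stmt1_general (Q : ℕ) (φ : ℝ) (hφ : 1 + φ * Q ≠ 0) :
    ∑ q ∈ Finset.Icc 1 Q, ∑ j ∈ Finset.Icc 1 (Q + 1),
      ((Q : ℝ) * (if q < j then 1 else 0) - j + 1 +
          φ * Q * (2 * q - Q - 1) / (2 * (1 + φ * Q))) *
        (if q < j then 1 else 0)
      = Q * (φ * Q ^ 3 + 2 * Q ^ 2 - φ * Q - 2) / (12 * (1 + φ * Q)) := by
  set B : ℝ := φ * Q / (2 * (1 + φ * Q))
  have inner : ∀ q ∈ Icc 1 Q,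
      ∑ j ∈ Icc 1 (Q + 1),
        ((Q : ℝ) * (if q < j then 1 else 0) - j + 1 +
            φ * Q * (2 * q - Q - 1) / (2 * (1 + φ * Q))) * (if q < j then 1 else 0)
      = ((Q + 1) * Q / 2 - B * (Q + 1) ^ 2) + (3 * B * (Q + 1) - (2 * Q + 1) / 2) * q
          + (1 / 2 - 2 * B) * q ^ 2 := by
    intro q hq
    have hqQ : q ≤ Q + 1 := by simp only [mem_Icc] at hq; omega
    have hterm : ∀ j : ℕ, ((Q : ℝ) * (if q < j then 1 else 0) - j + 1 +
          φ * Q * (2 * q - Q - 1) / (2 * (1 + φ * Q))) * (if q < j then 1 else 0)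
        = if q < j then (Q + 1 + B * (2 * q - Q - 1)) - j else 0 := by
      intro j
      split_ifs <;> ring
    simp only [hterm, sum_Icc_one_ite_lt, sum_Ioc_const_sub _ hqQ]
    push_cast
    ring
  rw [sum_congr rfl inner, sum_Icc_one_quadratic]
  have hφ' : 1 + (Q : ℝ) * φ ≠ 0 := by rwa [mul_comm]
  simp only [B]
  field_simp
  ring

theorem stmt1 (Q : ℕ) (hQ : 2 ≤ Q) (φ : ℝ) (hφ : 1 + φ * Q ≠ 0) :
    ∑ q ∈ Finset.Icc 1 Q, ∑ j ∈ Finset.Icc 1 (Q + 1),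
      ((Q : ℝ) * (if q < j then 1 else 0) - j + 1 +
          φ * Q * (2 * q - Q - 1) / (2 * (1 + φ * Q))) *
        (if q < j then 1 else 0)
      = Q * (φ * Q ^ 3 + 2 * Q ^ 2 - φ * Q - 2) / (12 * (1 + φ * Q)) :=
  stmt1_general Q φ hφ
end

section
/- For integers Q ≥ 2, real φ with 1 + φQ ≠ 0, and T₁ = 12(1 + φQ)/(Q(Q+1)(φQ² + 2Q − φQ − 2)), we have for each fixed s with 1 ≤ s ≤ Q: T₁ · Σ_{q=1}^{Q} Σ_{j=1}^{Q+1} (Q·𝟙(j > q) − j + 1 + φQ(2q−Q−1)/(2(1+φQ))) · 𝟙(j − q = s) = 6(s − Q − 1)((1 + 2φQ)s − (1 + φ + φQ)Q)/(Q(Q+1)(φQ² + 2Q − φQ − 2)). -/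
open Finset

lemma sum_Icc_id_real (M : ℕ) : ∑ q ∈ Finset.Icc 1 M, (q : ℝ) = M * (M + 1) / 2 := by
  induction M with
  | zero => simp
  | succ n ih =>
    rw [Finset.sum_Icc_succ_top (by omega), ih]
    push_cast; ring

theorem stmt2 (Q : ℕ) (hQ : 2 ≤ Q) (φ : ℝ) (hφ : 1 + φ * Q ≠ 0)
    (hden : φ * Q ^ 2 + 2 * Q - φ * Q - 2 ≠ 0)
    (T₁ : ℝ) (hT₁ : T₁ = 12 * (1 + φ * Q) / (Q * (Q + 1) * (φ * Q ^ 2 + 2 * Q - φ * Q - 2)))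
    (s : ℕ) (hs1 : 1 ≤ s) (hsQ : s ≤ Q) :
    T₁ * ∑ q ∈ Finset.Icc 1 Q, ∑ j ∈ Finset.Icc 1 (Q + 1),
      ((Q : ℝ) * (if q < j then 1 else 0) - j + 1 +
          φ * Q * (2 * q - Q - 1) / (2 * (1 + φ * Q))) *
        (if j = q + s then 1 else 0)
      = 6 * ((s : ℝ) - Q - 1) * ((1 + 2 * φ * Q) * s - (1 + φ + φ * Q) * Q) /
          (Q * (Q + 1) * (φ * Q ^ 2 + 2 * Q - φ * Q - 2)) := by
  set M := Q + 1 - s with hM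
  have hMs : M + s = Q + 1 := by omega
  have hMc : (M : ℝ) = (Q : ℝ) + 1 - s := by
    have := congrArg (Nat.cast (R := ℝ)) hMs
    push_cast at this; linarith
  have hin : ∀ q ∈ Finset.Icc 1 Q,
      (∑ j ∈ Finset.Icc 1 (Q + 1),
      ((Q : ℝ) * (if q < j then 1 else 0) - j + 1 +
          φ * Q * (2 * q - Q - 1) / (2 * (1 + φ * Q))) *
        (if j = q + s then 1 else 0))
      = (if q ∈ Finset.Icc 1 M then
          ((Q : ℝ) - (q + s) + 1 + φ * Q * (2 * q - Q - 1) / (2 * (1 + φ * Q)))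
        else 0) := by
    intro q hq
    simp only [mul_ite, mul_one, mul_zero]
    rw [Finset.sum_ite_eq' (Finset.Icc 1 (Q + 1)) (q + s)]
    simp only [Finset.mem_Icc] at hq ⊢
    by_cases h : q ≤ M
    · rw [if_pos (by omega), if_pos (by omega), if_pos (by omega)]
      push_cast; ring
    · rw [if_neg (by omega), if_neg (by omega)]
  rw [Finset.sum_congr rfl hin, Finset.sum_ite_mem,
    Finset.inter_eq_right.mpr (Finset.Icc_subset_Icc_right (by omega))]
  have hexp : ∑ q ∈ Finset.Icc 1 M,
      ((Q : ℝ) - (q + s) + 1 + φ * Q * (2 * q - Q - 1) / (2 * (1 + φ * Q)))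
      = ∑ q ∈ Finset.Icc 1 M,
        (((Q : ℝ) - s + 1 + φ * Q * (-(Q:ℝ) - 1) / (2 * (1 + φ * Q)))
          + (q : ℝ) * (-1 + φ * Q * 2 / (2 * (1 + φ * Q)))) := by
    apply Finset.sum_congr rfl
    intro q _
    field_simp
    ring
  rw [hexp, Finset.sum_add_distrib, ← Finset.sum_mul, sum_Icc_id_real,
    Finset.sum_const, Nat.card_Icc]
  simp only [Nat.add_sub_cancel, nsmul_eq_mul]
  rw [hT₁, hMc]
  have hQ0 : (Q : ℝ) ≠ 0 := by positivity
  have hQ1 : (Q : ℝ) + 1 ≠ 0 := by positivity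
  field_simp
  ring
end

section
/- For integers Q ≥ 2, real φ, and any real sequence β₁, …, β_{Q+1}, the sum Σ_{q=1}^{Q} Σ_{j=1}^{Q+1} [−φ(Q − 2q + 1) + ((φQ+1)/Q)(Q·𝟙(j=q) + 2Q·𝟙(j>q) + 𝟙(j=Q+1) − 2j + 1)]·β_j equals 0. -/
open Finset

theorem stmt10 (Q : ℕ) (hQ : 2 ≤ Q) (φ : ℝ) (β : ℕ → ℝ) :
    ∑ q ∈ Finset.Icc 1 Q, ∑ j ∈ Finset.Icc 1 (Q + 1),
      (-φ * ((Q : ℝ) - 2 * q + 1) +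
        ((φ * Q + 1) / Q) *
          ((Q : ℝ) * (if j = q then 1 else 0) + 2 * Q * (if q < j then 1 else 0) +
            (if j = Q + 1 then 1 else 0) - 2 * j + 1)) * β j
      = 0 := by
  have hQ0 : (Q : ℝ) ≠ 0 := Nat.cast_ne_zero.mpr (by omega)
  rw [Finset.sum_comm]
  apply Finset.sum_eq_zero
  intro j hj
  rw [Finset.mem_Icc] at hj
  rw [← Finset.sum_mul]
  have h1 : ∑ q ∈ Finset.Icc 1 Q, (if j = q then (1:ℝ) else 0)
      = 1 - (if j = Q + 1 then (1:ℝ) else 0) := by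
    rw [Finset.sum_ite_eq]
    simp only [Finset.mem_Icc]
    split_ifs with h h2 <;> simp_all <;> omega
  have h2 : ∑ q ∈ Finset.Icc 1 Q, (if q < j then (1:ℝ) else 0) = (j:ℝ) - 1 := by
    rw [Finset.sum_boole]
    have he : (Finset.Icc 1 Q).filter (fun q => q < j) = Finset.Ico 1 j := by
      ext q
      simp only [Finset.mem_filter, Finset.mem_Icc, Finset.mem_Ico]
      omega
    rw [he, Nat.card_Ico]
    have h1j : (1:ℕ) ≤ j := hj.1
    push_cast [h1j]
    ring
  have h3 : ∑ q ∈ Finset.Icc 1 Q, (q:ℝ) = (Q:ℝ) * ((Q:ℝ) + 1) / 2 := by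
    have hn : ∑ q ∈ Finset.Icc 1 Q, q = ∑ q ∈ Finset.range (Q + 1), q := by
      rw [Finset.range_eq_Ico]
      rw [← Finset.Ico_add_one_right_eq_Icc]
      rw [Finset.sum_Ico_eq_sum_range, Finset.sum_Ico_eq_sum_range]
      simp only [Nat.succ_sub_one, Nat.sub_zero, zero_add]
      rw [Finset.sum_range_succ']
      simp [add_comm]
    have hg := Finset.sum_range_id_mul_two (Q + 1)
    have : (∑ q ∈ Finset.Icc 1 Q, q) * 2 = (Q + 1) * Q := by
      rw [hn, hg]; simp
    have hr : ((∑ q ∈ Finset.Icc 1 Q, q : ℕ) : ℝ) * 2 = ((Q:ℝ) + 1) * Q := by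
      exact_mod_cast congrArg (Nat.cast : ℕ → ℝ) this
    push_cast at hr ⊢
    linarith
  set t : ℝ := if j = Q + 1 then (1:ℝ) else 0 with ht
  have expand : ∑ q ∈ Finset.Icc 1 Q,
      (-φ * ((Q : ℝ) - 2 * q + 1) +
        ((φ * Q + 1) / Q) *
          ((Q : ℝ) * (if j = q then 1 else 0) + 2 * Q * (if q < j then 1 else 0) +
            (if j = Q + 1 then 1 else 0) - 2 * j + 1))
      = (2 * φ) * (∑ q ∈ Finset.Icc 1 Q, (q:ℝ))
        + (((φ * Q + 1) / Q) * Q) * (∑ q ∈ Finset.Icc 1 Q, (if j = q then (1:ℝ) else 0))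
        + (((φ * Q + 1) / Q) * (2 * Q)) * (∑ q ∈ Finset.Icc 1 Q, (if q < j then (1:ℝ) else 0))
        + (Q:ℝ) * (-φ * ((Q:ℝ) + 1) + ((φ * Q + 1) / Q) * (t - 2 * j + 1)) := by
    rw [Finset.mul_sum, Finset.mul_sum, Finset.mul_sum, ← Finset.sum_add_distrib,
      ← Finset.sum_add_distrib]
    rw [show ((Q:ℝ) * (-φ * ((Q:ℝ) + 1) + ((φ * Q + 1) / Q) * (t - 2 * j + 1)))
        = ∑ _q ∈ Finset.Icc 1 Q, (-φ * ((Q:ℝ) + 1) + ((φ * Q + 1) / Q) * (t - 2 * j + 1)) by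
      rw [Finset.sum_const, Nat.card_Icc]
      simp only [nsmul_eq_mul]
      push_cast
      ring_nf]
    rw [← Finset.sum_add_distrib]
    refine Finset.sum_congr rfl fun q _ => by rw [ht]; ring
  rw [expand, h1, h2, h3]
  rw [show (2 * φ) * ((Q:ℝ) * ((Q:ℝ) + 1) / 2)
        + (((φ * Q + 1) / Q) * Q) * (1 - t)
        + (((φ * Q + 1) / Q) * (2 * Q)) * ((j:ℝ) - 1)
        + (Q:ℝ) * (-φ * ((Q:ℝ) + 1) + ((φ * Q + 1) / Q) * (t - 2 * j + 1)) = 0 by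
    field_simp
    ring]
  exact zero_mul _
end

section
/- For integers Q ≥ 2, real φ with φQ³ − 3φQ² + 2Q² + 2φQ − 3Q + 1 ≠ 0, and T₂ = 6/(φQ(1 − Q²) + (2Q² − 3Q + 1)(φQ + 1)), for each s with 1 ≤ s ≤ Q: T₂ · Σ_{q=1}^{Q} Σ_{j=1}^{Q+1} [−φ(Q − 2q + 1) + ((φQ+1)/Q)(Q·𝟙(j=q) + 2Q·𝟙(j>q) + 𝟙(j=Q+1) − 2j + 1)]·𝟙(j − q = s) = 6(φQ³ − 3φQ²s + φQ² + Q² + 2φQs² − 2φQs + φQ − 2Qs + s²)/(Q(φQ³ − 3φQ² + 2Q² + 2φQ − 3Q + 1)). -/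
open Finset

lemma gauss_Icc (m : ℕ) : ∑ q ∈ Finset.Icc 1 m, (q : ℝ) = m * (m + 1) / 2 := by
  induction m with
  | zero => simp
  | succ n ih =>
    rw [Finset.sum_Icc_succ_top (by omega)]
    push_cast
    rw [ih]; ring

lemma sum_linear (m : ℕ) (a b : ℝ) :
    ∑ q ∈ Finset.Icc 1 m, (a + b * (q : ℝ)) = m * a + b * (m * (m + 1) / 2) := by
  rw [Finset.sum_add_distrib, Finset.sum_const, ← Finset.mul_sum, gauss_Icc]
  simp [Nat.card_Icc, mul_comm]

theorem stmt11 (Q : ℕ) (hQ : 2 ≤ Q) (φ : ℝ)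
    (hden : φ * Q ^ 3 - 3 * φ * Q ^ 2 + 2 * Q ^ 2 + 2 * φ * Q - 3 * Q + 1 ≠ 0)
    (T₂ : ℝ) (hT₂ : T₂ = 6 / (φ * Q * (1 - Q ^ 2) + (2 * Q ^ 2 - 3 * Q + 1) * (φ * Q + 1)))
    (s : ℕ) (hs1 : 1 ≤ s) (hsQ : s ≤ Q) :
    T₂ * ∑ q ∈ Finset.Icc 1 Q, ∑ j ∈ Finset.Icc 1 (Q + 1),
      (-φ * ((Q : ℝ) - 2 * q + 1) +
        ((φ * Q + 1) / Q) *
          ((Q : ℝ) * (if j = q then 1 else 0) + 2 * Q * (if q < j then 1 else 0) +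
            (if j = Q + 1 then 1 else 0) - 2 * j + 1)) *
        (if j = q + s then 1 else 0)
      = 6 * (φ * Q ^ 3 - 3 * φ * Q ^ 2 * s + φ * Q ^ 2 + Q ^ 2 + 2 * φ * Q * s ^ 2 -
            2 * φ * Q * s + φ * Q - 2 * Q * s + (s : ℝ) ^ 2) /
          (Q * (φ * Q ^ 3 - 3 * φ * Q ^ 2 + 2 * Q ^ 2 + 2 * φ * Q - 3 * Q + 1)) := by
  have hQ0 : (Q : ℝ) ≠ 0 := by positivity
  set m := Q + 1 - s with hm
  have hm1 : 1 ≤ m := by omega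
  have hmQ : m ≤ Q := by omega
  have hmcast : (m : ℝ) = (Q : ℝ) + 1 - s := by
    have : (m : ℕ) + s = Q + 1 := by omega
    have := congrArg (fun n : ℕ => (n : ℝ)) this
    push_cast at this
    linarith
  -- inner sum collapses
  have hinner : ∀ q ∈ Finset.Icc 1 Q,
      (∑ j ∈ Finset.Icc 1 (Q + 1),
      (-φ * ((Q : ℝ) - 2 * q + 1) +
        ((φ * Q + 1) / Q) *
          ((Q : ℝ) * (if j = q then 1 else 0) + 2 * Q * (if q < j then 1 else 0) +
            (if j = Q + 1 then 1 else 0) - 2 * j + 1)) *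
        (if j = q + s then 1 else 0))
      = if q ≤ m then
          ((-φ * ((Q : ℝ) - 2 * q + 1) +
            ((φ * Q + 1) / Q) * (2 * (Q : ℝ) - 2 * (q + s) + 1)) +
           ((φ * Q + 1) / Q) * (if q = m then 1 else 0)) else 0 := by
    intro q hq
    simp only [Finset.mem_Icc] at hq
    simp only [mul_ite, mul_one, mul_zero]
    rw [Finset.sum_ite_eq' (Finset.Icc 1 (Q + 1)) (q + s)]
    simp only [Finset.mem_Icc]
    have h1 : (1 ≤ q + s ∧ q + s ≤ Q + 1) ↔ q ≤ m := by omega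
    by_cases hle : q ≤ m
    · rw [if_pos (h1.mpr hle), if_pos hle]
      have hne : ¬ (q + s = q) := by omega
      have hlt : q < q + s := by omega
      have heq : (q + s = Q + 1) ↔ q = m := by omega
      rw [if_neg hne, if_pos hlt]
      push_cast
      rw [show ((if q + s = Q + 1 then (1:ℝ) else 0) = if q = m then 1 else 0) by
        simp [heq]]
      by_cases hqm : q = m <;> simp [hqm] <;> ring
    · rw [if_neg (fun h => hle (h1.mp h)), if_neg hle]
  rw [Finset.sum_congr rfl hinner, ← Finset.sum_filter,
    show (Finset.Icc 1 Q).filter (fun q => q ≤ m) = Finset.Icc 1 m by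
      ext x; simp only [Finset.mem_filter, Finset.mem_Icc]; omega]
  rw [Finset.sum_add_distrib]
  have hind : ∑ q ∈ Finset.Icc 1 m, ((φ * Q + 1) / Q) * (if q = m then (1:ℝ) else 0)
      = (φ * Q + 1) / Q := by
    simp only [mul_ite, mul_one, mul_zero]
    rw [Finset.sum_ite_eq' (Finset.Icc 1 m) m]
    simp [hm1]
  rw [hind]
  have hlin : ∑ q ∈ Finset.Icc 1 m,
      (-φ * ((Q : ℝ) - 2 * q + 1) +
        ((φ * Q + 1) / Q) * (2 * (Q : ℝ) - 2 * ((q : ℝ) + s) + 1))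
      = (m : ℝ) * ((-φ * ((Q : ℝ) + 1) + ((φ * Q + 1) / Q) * (2 * (Q : ℝ) - 2 * s + 1)))
        + (2 * φ - 2 * ((φ * Q + 1) / Q)) * ((m : ℝ) * (m + 1) / 2) := by
    rw [← sum_linear m _ _]
    apply Finset.sum_congr rfl
    intro q hq; ring
  rw [hlin, hT₂]
  have hdeq : φ * Q * (1 - (Q:ℝ) ^ 2) + (2 * Q ^ 2 - 3 * Q + 1) * (φ * Q + 1)
      = φ * Q ^ 3 - 3 * φ * Q ^ 2 + 2 * Q ^ 2 + 2 * φ * Q - 3 * Q + 1 := by ring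
  rw [hdeq, hmcast]
  field_simp
  ring
end

section
/- For integers Q ≥ 2, real φ with φQ² − 2φQ + 2Q − 1 ≠ 0, and T₃ = 1/((Q−1)(φQ² − 2φQ + 2Q − 1)), for each s with 1 ≤ s ≤ Q: T₃ · Σ_{q=1}^{Q} Σ_{j=1}^{Q+1} [(Q+1)(φQ+2)𝟙(j=q) + 6(φQ+1)𝟙(j>q) + ((Q+1)(φQ+2)/Q)𝟙(j=Q+1) − 4φQ − 6φj + 6φq + 2φ − 2 − 6j/Q + 4/Q]·𝟙(j − q = s) = (2φQ³ − 8φQ²s + 5φQ² + Q² + 6φQs² − 8φQs + 3φQ − 4Qs + Q + 3s² − s)/(Q(Q−1)(φQ² − 2φQ + 2Q − 1)). -/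
open Finset

lemma gaussR (N : ℕ) : ∑ q ∈ Finset.Icc 1 N, (q : ℝ) = N * (N + 1) / 2 := by
  induction N with
  | zero => simp
  | succ n ih =>
    rw [Finset.sum_Icc_succ_top (by omega)]
    push_cast
    rw [ih]; ring

theorem stmt14 (Q : ℕ) (hQ : 2 ≤ Q) (φ : ℝ)
    (hden : φ * Q ^ 2 - 2 * φ * Q + 2 * Q - 1 ≠ 0)
    (T₃ : ℝ) (hT₃ : T₃ = 1 / (((Q : ℝ) - 1) * (φ * Q ^ 2 - 2 * φ * Q + 2 * Q - 1)))
    (s : ℕ) (hs1 : 1 ≤ s) (hsQ : s ≤ Q) :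
    T₃ * ∑ q ∈ Finset.Icc 1 Q, ∑ j ∈ Finset.Icc 1 (Q + 1),
      (((Q : ℝ) + 1) * (φ * Q + 2) * (if j = q then 1 else 0) +
        6 * (φ * Q + 1) * (if q < j then 1 else 0) +
        (((Q : ℝ) + 1) * (φ * Q + 2) / Q) * (if j = Q + 1 then 1 else 0) -
        4 * φ * Q - 6 * φ * j + 6 * φ * q + 2 * φ - 2 - 6 * j / Q + 4 / Q) *
        (if j = q + s then 1 else 0)
      = (2 * φ * Q ^ 3 - 8 * φ * Q ^ 2 * s + 5 * φ * Q ^ 2 + Q ^ 2 + 6 * φ * Q * s ^ 2 -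
          8 * φ * Q * s + 3 * φ * Q - 4 * Q * s + (Q : ℝ) + 3 * s ^ 2 - s) /
          (Q * (Q - 1) * (φ * Q ^ 2 - 2 * φ * Q + 2 * Q - 1)) := by
  have hs' : s ≤ Q + 1 := by omega
  set N := Q + 1 - s with hNdef
  have hN1 : 1 ≤ N := by omega
  have hNQ : N ≤ Q := by omega
  have hQ0 : (Q : ℝ) ≠ 0 := Nat.cast_ne_zero.mpr (by omega)
  have hQ2 : (2 : ℝ) ≤ (Q : ℝ) := by exact_mod_cast hQ
  have hQ1 : (Q : ℝ) - 1 ≠ 0 := by linarith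
  have hNc : (N : ℝ) = (Q : ℝ) + 1 - s := by
    rw [hNdef, Nat.cast_sub hs']; push_cast; ring
  set C0 : ℝ := 6 * (φ * Q + 1) - 4 * φ * Q - 6 * φ * s + 2 * φ - 2 - 6 * s / Q + 4 / Q
    with hC0
  set D : ℝ := ((Q : ℝ) + 1) * (φ * Q + 2) / Q with hD
  have step1 : ∀ q ∈ Finset.Icc 1 Q,
      (∑ j ∈ Finset.Icc 1 (Q + 1),
        (((Q : ℝ) + 1) * (φ * Q + 2) * (if j = q then 1 else 0) +
          6 * (φ * Q + 1) * (if q < j then 1 else 0) +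
          (((Q : ℝ) + 1) * (φ * Q + 2) / Q) * (if j = Q + 1 then 1 else 0) -
          4 * φ * Q - 6 * φ * j + 6 * φ * q + 2 * φ - 2 - 6 * j / Q + 4 / Q) *
          (if j = q + s then 1 else 0))
      = if q ∈ Finset.Icc 1 N then
          C0 + (-6 / Q) * q + (if q = N then D else 0) else 0 := by
    intro q hq
    simp only [Finset.mem_Icc] at hq
    simp only [mul_ite, mul_one, mul_zero]
    rw [Finset.sum_ite_eq' (Finset.Icc 1 (Q + 1)) (q + s)]
    simp only [Finset.mem_Icc]
    by_cases h : q ≤ N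
    · rw [if_neg (by omega : ¬ (q + s = q)), if_pos (by omega : q < q + s)]
      rw [if_pos (by omega : 1 ≤ q + s ∧ q + s ≤ Q + 1),
        if_pos (by omega : 1 ≤ q ∧ q ≤ N)]
      by_cases h2 : q = N
      · rw [if_pos (by omega : q + s = Q + 1), if_pos h2, hC0, hD]
        push_cast; ring
      · rw [if_neg (by omega : ¬ (q + s = Q + 1)), if_neg h2, hC0]
        push_cast; ring
    · rw [if_neg (by omega : ¬ (1 ≤ q + s ∧ q + s ≤ Q + 1)),
        if_neg (by omega : ¬ (1 ≤ q ∧ q ≤ N))]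
  rw [Finset.sum_congr rfl step1, Finset.sum_ite_mem]
  have hint : Finset.Icc 1 Q ∩ Finset.Icc 1 N = Finset.Icc 1 N := by
    ext x; simp only [Finset.mem_inter, Finset.mem_Icc]; omega
  rw [hint]
  rw [Finset.sum_add_distrib, Finset.sum_add_distrib, Finset.sum_const,
    ← Finset.mul_sum, gaussR, Finset.sum_ite_eq' (Finset.Icc 1 N) N (fun _ => D),
    if_pos (by simp [Finset.mem_Icc]; omega), Nat.card_Icc]
  subst hT₃
  simp only [nsmul_eq_mul, hC0, hD]
  have hcard : ((N + 1 - 1 : ℕ) : ℝ) = (Q : ℝ) + 1 - s := by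
    simp only [Nat.add_sub_cancel]; exact hNc
  rw [hcard, hNc]
  field_simp
  ring
end

section
/- For integers Q ≥ 2, real φ with 1 + φQ ≠ 0 and φQ² + 2Q − φQ − 2 ≠ 0, and an integer ℓ with 1 ≤ ℓ ≤ Q, with T₁ = 12(1+φQ)/(Q(Q+1)(φQ² + 2Q − φQ − 2)): T₁ · Σ_{q=1}^{Q} Σ_{j=1}^{Q+1} (−j + 1 + φQ(2q − Q − 1)/(2(1+φQ)))·𝟙(max(1, q−ℓ+1) ≤ j ≤ q) = −ℓ(6φQ³ − 9φℓQ² + 3φQ² + 6Q² + 4φℓ²Q − 3φℓQ − 6ℓQ − φQ + 2ℓ² − 2)/(Q(Q+1)(φQ² + 2Q − φQ − 2)). -/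
open Finset

private lemma aux_split (f : ℕ → ℝ) {m n : ℕ} (h : m ≤ n) :
    ∑ q ∈ Icc 1 n, f q = (∑ q ∈ Icc 1 m, f q) + ∑ q ∈ Icc (m+1) n, f q := by
  have h2 := Finset.sum_Ioc_consecutive f (Nat.zero_le m) h
  simp only [← Finset.Icc_add_one_left_eq_Ioc, Nat.succ_eq_add_one, zero_add] at h2
  exact h2.symm

private lemma aux_L1 (n : ℕ) : ∑ q ∈ Icc 1 n, (q:ℝ) = n*(n+1)/2 := by
  induction n with
  | zero => simp
  | succ n ih =>
    rw [sum_Icc_succ_top (by omega), ih]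
    push_cast; ring

private lemma aux_L2 (n : ℕ) : ∑ q ∈ Icc 1 n, (q:ℝ)^2 = n*(n+1)*(2*n+1)/6 := by
  induction n with
  | zero => simp
  | succ n ih =>
    rw [sum_Icc_succ_top (by omega), ih]
    push_cast; ring

theorem stmt16 (Q : ℕ) (hQ : 2 ≤ Q) (φ : ℝ) (hφ : 1 + φ * Q ≠ 0)
    (hden : φ * Q ^ 2 + 2 * Q - φ * Q - 2 ≠ 0)
    (ℓ : ℕ) (hℓ1 : 1 ≤ ℓ) (hℓQ : ℓ ≤ Q)
    (T₁ : ℝ) (hT₁ : T₁ = 12 * (1 + φ * Q) / (Q * (Q + 1) * (φ * Q ^ 2 + 2 * Q - φ * Q - 2))) :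
    T₁ * ∑ q ∈ Finset.Icc 1 Q, ∑ j ∈ Finset.Icc 1 (Q + 1),
      (-(j : ℝ) + 1 + φ * Q * (2 * q - Q - 1) / (2 * (1 + φ * Q))) *
        (if max 1 (q - ℓ + 1) ≤ j ∧ j ≤ q then 1 else 0)
      = -(ℓ : ℝ) * (6 * φ * Q ^ 3 - 9 * φ * ℓ * Q ^ 2 + 3 * φ * Q ^ 2 + 6 * Q ^ 2 +
            4 * φ * ℓ ^ 2 * Q - 3 * φ * ℓ * Q - 6 * ℓ * Q - φ * Q + 2 * ℓ ^ 2 - 2) /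
          (Q * (Q + 1) * (φ * Q ^ 2 + 2 * Q - φ * Q - 2)) := by
  have hQ0 : (Q:ℝ) ≠ 0 := by
    exact Nat.cast_ne_zero.mpr (by omega)
  have hQ1 : (Q:ℝ) + 1 ≠ 0 := by positivity
  -- Step 1: evaluate inner sums
  have step1 : ∀ q ∈ Icc 1 Q,
      (∑ j ∈ Finset.Icc 1 (Q + 1),
        (-(j : ℝ) + 1 + φ * Q * (2 * q - Q - 1) / (2 * (1 + φ * Q))) *
          (if max 1 (q - ℓ + 1) ≤ j ∧ j ≤ q then 1 else 0))
      = if q ≤ ℓ then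
          (-((q:ℝ)*((q:ℝ)+1)/2) + (q:ℝ)*(1 + φ * Q * (2 * q - Q - 1) / (2 * (1 + φ * Q))))
        else
          ((ℓ:ℝ)*(1 + φ * Q * (2 * q - Q - 1) / (2 * (1 + φ * Q)))
            - ((q:ℝ)*((q:ℝ)+1)/2 - ((q:ℝ)-(ℓ:ℝ))*((q:ℝ)-(ℓ:ℝ)+1)/2)) := by
    intro q hq
    rw [mem_Icc] at hq
    have hfilter :
        (∑ j ∈ Finset.Icc 1 (Q + 1),
          (-(j : ℝ) + 1 + φ * Q * (2 * q - Q - 1) / (2 * (1 + φ * Q))) *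
            (if max 1 (q - ℓ + 1) ≤ j ∧ j ≤ q then 1 else 0))
        = ∑ j ∈ Icc (max 1 (q - ℓ + 1)) q,
            ((1 + φ * Q * (2 * q - Q - 1) / (2 * (1 + φ * Q))) - (j:ℝ)) := by
      simp only [mul_ite, mul_one, mul_zero]
      rw [← Finset.sum_filter]
      refine Finset.sum_congr ?_ (fun j _ => by ring)
      ext j
      simp only [Finset.mem_filter, Finset.mem_Icc, max_le_iff]
      omega
    by_cases hql : q ≤ ℓ
    · rw [if_pos hql, hfilter]
      have hm : max 1 (q - ℓ + 1) = 1 := by omega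
      rw [hm, Finset.sum_sub_distrib, Finset.sum_const, aux_L1, Nat.card_Icc,
        Nat.add_sub_cancel, nsmul_eq_mul]
      ring
    · rw [if_neg hql, hfilter]
      have hm : max 1 (q - ℓ + 1) = q - ℓ + 1 := by omega
      rw [hm]
      have hsplit := aux_split
        (fun j => ((1 + φ * Q * (2 * q - Q - 1) / (2 * (1 + φ * Q))) - (j:ℝ)))
        (show q - ℓ ≤ q by omega)
      have hval : ∀ n : ℕ,
          ∑ j ∈ Icc 1 n, ((1 + φ * Q * (2 * q - Q - 1) / (2 * (1 + φ * Q))) - (j:ℝ))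
          = (n:ℝ) * (1 + φ * Q * (2 * q - Q - 1) / (2 * (1 + φ * Q))) - (n:ℝ)*((n:ℝ)+1)/2 := by
        intro n
        rw [Finset.sum_sub_distrib, Finset.sum_const, aux_L1, Nat.card_Icc,
          Nat.add_sub_cancel, nsmul_eq_mul]
      have heq : ∑ j ∈ Icc (q - ℓ + 1) q,
          ((1 + φ * Q * (2 * q - Q - 1) / (2 * (1 + φ * Q))) - (j:ℝ))
          = (∑ j ∈ Icc 1 q, ((1 + φ * Q * (2 * q - Q - 1) / (2 * (1 + φ * Q))) - (j:ℝ)))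
            - ∑ j ∈ Icc 1 (q - ℓ), ((1 + φ * Q * (2 * q - Q - 1) / (2 * (1 + φ * Q))) - (j:ℝ)) := by
        rw [hsplit]; ring
      rw [heq, hval q, hval (q - ℓ)]
      have hc : ((q - ℓ : ℕ) : ℝ) = (q:ℝ) - (ℓ:ℝ) := by
        push_cast [Nat.cast_sub (by omega : ℓ ≤ q)]; ring
      rw [hc]
      ring
  rw [Finset.sum_congr rfl step1, aux_split _ hℓQ]
  have e1 : ∑ q ∈ Icc 1 ℓ, (if q ≤ ℓ then
          (-((q:ℝ)*((q:ℝ)+1)/2) + (q:ℝ)*(1 + φ * Q * (2 * q - Q - 1) / (2 * (1 + φ * Q))))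
        else
          ((ℓ:ℝ)*(1 + φ * Q * (2 * q - Q - 1) / (2 * (1 + φ * Q)))
            - ((q:ℝ)*((q:ℝ)+1)/2 - ((q:ℝ)-(ℓ:ℝ))*((q:ℝ)-(ℓ:ℝ)+1)/2)))
      = (1/2 - φ*Q*((Q:ℝ)+1)/(2*(1+φ*Q))) * ((ℓ:ℝ)*((ℓ:ℝ)+1)/2)
        + (-(1/2) + φ*Q/(1+φ*Q)) * ((ℓ:ℝ)*((ℓ:ℝ)+1)*(2*(ℓ:ℝ)+1)/6) := by
    rw [← aux_L1, ← aux_L2, Finset.mul_sum, Finset.mul_sum, ← Finset.sum_add_distrib]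
    refine Finset.sum_congr rfl (fun q hq => ?_)
    rw [mem_Icc] at hq
    rw [if_pos hq.2]
    field_simp
    ring
  have hF2 : ∀ n : ℕ, ∑ q ∈ Icc 1 n, (((ℓ:ℝ) - (ℓ:ℝ)*(φ*Q*((Q:ℝ)+1)/(2*(1+φ*Q))) + ((ℓ:ℝ)^2-(ℓ:ℝ))/2) + ((ℓ:ℝ)*(φ*Q/(1+φ*Q)) - (ℓ:ℝ))*(q:ℝ))
      = (n:ℝ)*((ℓ:ℝ) - (ℓ:ℝ)*(φ*Q*((Q:ℝ)+1)/(2*(1+φ*Q))) + ((ℓ:ℝ)^2-(ℓ:ℝ))/2) + ((ℓ:ℝ)*(φ*Q/(1+φ*Q)) - (ℓ:ℝ))*((n:ℝ)*((n:ℝ)+1)/2) := by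
    intro n
    rw [Finset.sum_add_distrib, Finset.sum_const, ← Finset.mul_sum, aux_L1, Nat.card_Icc,
      Nat.add_sub_cancel, nsmul_eq_mul]
  have e2 : ∑ q ∈ Icc (ℓ+1) Q, (if q ≤ ℓ then
          (-((q:ℝ)*((q:ℝ)+1)/2) + (q:ℝ)*(1 + φ * Q * (2 * q - Q - 1) / (2 * (1 + φ * Q))))
        else
          ((ℓ:ℝ)*(1 + φ * Q * (2 * q - Q - 1) / (2 * (1 + φ * Q)))
            - ((q:ℝ)*((q:ℝ)+1)/2 - ((q:ℝ)-(ℓ:ℝ))*((q:ℝ)-(ℓ:ℝ)+1)/2)))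
      = ((Q:ℝ)*((ℓ:ℝ) - (ℓ:ℝ)*(φ*Q*((Q:ℝ)+1)/(2*(1+φ*Q))) + ((ℓ:ℝ)^2-(ℓ:ℝ))/2) + ((ℓ:ℝ)*(φ*Q/(1+φ*Q)) - (ℓ:ℝ))*((Q:ℝ)*((Q:ℝ)+1)/2))
        - ((ℓ:ℝ)*((ℓ:ℝ) - (ℓ:ℝ)*(φ*Q*((Q:ℝ)+1)/(2*(1+φ*Q))) + ((ℓ:ℝ)^2-(ℓ:ℝ))/2) + ((ℓ:ℝ)*(φ*Q/(1+φ*Q)) - (ℓ:ℝ))*((ℓ:ℝ)*((ℓ:ℝ)+1)/2)) := by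
    have key : ∀ q ∈ Icc (ℓ+1) Q, (if q ≤ ℓ then
          (-((q:ℝ)*((q:ℝ)+1)/2) + (q:ℝ)*(1 + φ * Q * (2 * q - Q - 1) / (2 * (1 + φ * Q))))
        else
          ((ℓ:ℝ)*(1 + φ * Q * (2 * q - Q - 1) / (2 * (1 + φ * Q)))
            - ((q:ℝ)*((q:ℝ)+1)/2 - ((q:ℝ)-(ℓ:ℝ))*((q:ℝ)-(ℓ:ℝ)+1)/2))) = ((ℓ:ℝ) - (ℓ:ℝ)*(φ*Q*((Q:ℝ)+1)/(2*(1+φ*Q))) + ((ℓ:ℝ)^2-(ℓ:ℝ))/2) + ((ℓ:ℝ)*(φ*Q/(1+φ*Q)) - (ℓ:ℝ))*(q:ℝ) := by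
      intro q hq
      rw [mem_Icc] at hq
      rw [if_neg (by omega)]
      field_simp
      ring
    have hsp := aux_split (fun q => ((ℓ:ℝ) - (ℓ:ℝ)*(φ*Q*((Q:ℝ)+1)/(2*(1+φ*Q))) + ((ℓ:ℝ)^2-(ℓ:ℝ))/2) + ((ℓ:ℝ)*(φ*Q/(1+φ*Q)) - (ℓ:ℝ))*(q:ℝ)) hℓQ
    rw [hF2 Q, hF2 ℓ] at hsp
    rw [Finset.sum_congr rfl key]
    linarith
  rw [e1, e2, hT₁]
  field_simp
  ring
end

section
/- For x, y real with x ≠ 0, x ≠ 2y, and x ≠ 3y, the 5×5 symmetric matrix M with rows (2x−2y, −2y, −2y, −2y, −y), (−2y, 2x−2y, −2y, x−2y, −y), (−2y, −2y, 2x−2y, x−2y, x−y), (−2y, x−2y, x−2y, 2x−2y, −y), (−y, −y, x−y, −y, x−y) is invertible, and the bottom-right 2×2 block of M⁻¹ equals [[2(x−y)/(x(x−2y)), 2/(x−2y)], [2/(x−2y), 4/(x−2y)]]. -/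
open Matrix

theorem Matrix.isUnit_and_inv_eq_of_mul_eq_smul_one {n K : Type*} [Fintype n] [DecidableEq n]
    [Field K] {A B : Matrix n n K} {d : K} (hd : d ≠ 0) (h : A * B = d • 1) :
    IsUnit A ∧ A⁻¹ = d⁻¹ • B := by
  have hright : A * (d⁻¹ • B) = 1 := by
    rw [Matrix.mul_smul, h, smul_smul, inv_mul_cancel₀ hd, one_smul]
  exact ⟨(isUnit_iff_isUnit_det A).mpr (isUnit_det_of_right_inverse hright),
    inv_eq_right_inv hright⟩

section SteppedWedge

variable {R : Type*} [CommRing R]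

def steppedWedgePrecision (x y : R) : Matrix (Fin 5) (Fin 5) R :=
  of ![![2 * x - 2 * y, -2 * y, -2 * y, -2 * y, -y],
       ![-2 * y, 2 * x - 2 * y, -2 * y, x - 2 * y, -y],
       ![-2 * y, -2 * y, 2 * x - 2 * y, x - 2 * y, x - y],
       ![-2 * y, x - 2 * y, x - 2 * y, 2 * x - 2 * y, -y],
       ![-y, -y, x - y, -y, x - y]]

/-- `adjugate (steppedWedgePrecision x y) = x ^ 2 • steppedWedgeCofactor x y`, and
`det (steppedWedgePrecision x y) = 2 * x ^ 3 * (x - 2 * y) * (x - 3 * y)`. -/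
def steppedWedgeCofactor (x y : R) : Matrix (Fin 5) (Fin 5) R :=
  of ![![(x - 2 * y) ^ 2, y * (x - 2 * y), y * (x - 2 * y), 0, 0],
       ![y * (x - 2 * y), 2 * x ^ 2 - 8 * x * y + 7 * y ^ 2, 2 * x ^ 2 - 6 * x * y + y ^ 2,
         -2 * (x - y) * (x - 3 * y), -2 * x * (x - 3 * y)],
       ![y * (x - 2 * y), 2 * x ^ 2 - 6 * x * y + y ^ 2, 6 * x ^ 2 - 20 * x * y + 7 * y ^ 2,
         -2 * (2 * x - y) * (x - 3 * y), -6 * x * (x - 3 * y)],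
       ![0, -2 * (x - y) * (x - 3 * y), -2 * (2 * x - y) * (x - 3 * y),
         4 * (x - y) * (x - 3 * y), 4 * x * (x - 3 * y)],
       ![0, -2 * x * (x - 3 * y), -6 * x * (x - 3 * y), 4 * x * (x - 3 * y),
         8 * x * (x - 3 * y)]]

theorem steppedWedgePrecision_mul_cofactor (x y : R) :
    steppedWedgePrecision x y * steppedWedgeCofactor x y
      = (2 * x * (x - 2 * y) * (x - 3 * y)) • (1 : Matrix (Fin 5) (Fin 5) R) := by
  ext i j
  fin_cases i <;> fin_cases j <;>
    simp [steppedWedgePrecision, steppedWedgeCofactor, mul_apply, Fin.sum_univ_five,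
      one_apply] <;> ring

end SteppedWedge

theorem stmt19 (x y : ℝ) (hx : x ≠ 0) (hx2 : x ≠ 2 * y) (hx3 : x ≠ 3 * y)
    (M : Matrix (Fin 5) (Fin 5) ℝ)
    (hM : M = Matrix.of
      ![![2 * x - 2 * y, -2 * y, -2 * y, -2 * y, -y],
        ![-2 * y, 2 * x - 2 * y, -2 * y, x - 2 * y, -y],
        ![-2 * y, -2 * y, 2 * x - 2 * y, x - 2 * y, x - y],
        ![-2 * y, x - 2 * y, x - 2 * y, 2 * x - 2 * y, -y],
        ![-y, -y, x - y, -y, x - y]]) :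
    IsUnit M ∧
      M⁻¹ 3 3 = 2 * (x - y) / (x * (x - 2 * y)) ∧
      M⁻¹ 3 4 = 2 / (x - 2 * y) ∧
      M⁻¹ 4 3 = 2 / (x - 2 * y) ∧
      M⁻¹ 4 4 = 4 / (x - 2 * y) := by
  have h2y : x - 2 * y ≠ 0 := sub_ne_zero.mpr hx2
  have h3y : x - 3 * y ≠ 0 := sub_ne_zero.mpr hx3
  have hdet : 2 * x * (x - 2 * y) * (x - 3 * y) ≠ 0 := by positivity
  obtain ⟨hunit, hinv⟩ :=
    isUnit_and_inv_eq_of_mul_eq_smul_one hdet (steppedWedgePrecision_mul_cofactor x y)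
  obtain rfl : M = steppedWedgePrecision x y := hM
  refine ⟨hunit, ?_, ?_, ?_, ?_⟩ <;>
    · rw [hinv]
      simp only [steppedWedgeCofactor, _root_.mul_inv_rev, Matrix.smul_apply, of_apply,
        cons_val', cons_val, cons_val_fin_one, cons_val_one, cons_val_zero, smul_eq_mul]
      field_simp
      ring
end
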